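/- Let (x_n) be a strictly decreasing sequence in (0, 1/2] with x_n → 0 such that (x_n / x_{n+1}) is bounded, and let S = {x_n + Z : n ∈ N} ⊆ T. Then the topology τ_S of uniform convergence on S is the discrete topology on Z; concretely, there exist m, l ∈ N such that {k ∈ Z : k·x_n + Z ∈ [-1/(4lm), 1/(4lm)] + Z for all n} = {0}. -/
import Mathlib

/-- `T_m = [-1/(4m), 1/(4m)] + ℤ` inside the circle `𝕋 = ℝ/ℤ`. -/
def Tm (m : ℕ) : Set (AddCircle (1 : ℝ)) :=
  {z | ∃ r : ℝ, |r| ≤ 1 / (4 * m) ∧ (r : AddCircle (1 : ℝ)) = z}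

/-- If `(x_n)` is a strictly decreasing sequence in `(0, 1/2]` tending to `0` with
`(x_n / x_{n+1})` bounded, then the topology `τ_S` of uniform convergence on
`S = {x_n + ℤ}` is discrete: some basic neighbourhood `V_{S, l·m}` equals `{0}`. -/
theorem tauS_discrete_of_bounded_ratio (x : ℕ → ℝ) (hanti : StrictAnti x)
    (hmem : ∀ n, x n ∈ Set.Ioc (0 : ℝ) (1 / 2))
    (hlim : Filter.Tendsto x Filter.atTop (nhds 0))
    (hbdd : ∃ C : ℝ, ∀ n, x n / x (n + 1) ≤ C) :
    ∃ m l : ℕ, 0 < m ∧ 0 < l ∧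
      {k : ℤ | ∀ n : ℕ, (((k : ℝ) * x n : ℝ) : AddCircle (1 : ℝ)) ∈ Tm (l * m)} = {0} := by
  obtain ⟨C, hC⟩ := hbdd
  have hx0 : ∀ n, 0 < x n := fun n => (hmem n).1
  set m : ℕ := ⌈C⌉₊ + ⌈1 / x 0⌉₊ + 1 with hm
  refine ⟨m, 1, by positivity, one_pos, ?_⟩
  have hmpos : (0 : ℝ) < m := by positivity
  have hm1 : (1 : ℝ) ≤ m := by
    have : 1 ≤ m := by omega
    exact_mod_cast this
  have hmC : C ≤ (m : ℝ) := by
    have h1 : (⌈C⌉₊ : ℝ) ≤ m := by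
      have : ⌈C⌉₊ ≤ m := by omega
      exact_mod_cast this
    linarith [Nat.le_ceil C]
  have hmx0 : 1 / x 0 < (m : ℝ) := by
    have h1 : (⌈1 / x 0⌉₊ : ℝ) < m := by
      have : ⌈1 / x 0⌉₊ < m := by omega
      exact_mod_cast this
    linarith [Nat.le_ceil (1 / x 0)]
  have hsmall : 1 / (4 * (m : ℝ)) < x 0 := by
    rw [div_lt_iff₀ (by positivity)]
    rw [div_lt_iff₀ (hx0 0)] at hmx0
    nlinarith [hx0 0]
  have hCpos : 0 < C := lt_of_lt_of_le (div_pos (hx0 0) (hx0 1)) (hC 0)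
  ext k
  simp only [Set.mem_setOf_eq, Set.mem_singleton_iff, one_mul]
  constructor
  · intro hk
    by_contra hk0
    have hk1 : (1 : ℝ) ≤ |(k : ℝ)| := by
      rw [← Int.cast_abs]; exact_mod_cast Int.one_le_abs (by exact_mod_cast hk0)
    have hev : ∃ n, |(k : ℝ)| * x n ≤ 1 / (4 * m) := by
      have h : Filter.Tendsto (fun n => |(k : ℝ)| * x n) Filter.atTop (nhds 0) := by
        simpa using hlim.const_mul |(k : ℝ)|
      exact (h.eventually_le_const (show (0:ℝ) < 1 / (4 * m) by positivity)).exists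
    classical
    set n := Nat.find hev with hn
    have hnspec : |(k : ℝ)| * x n ≤ 1 / (4 * m) := Nat.find_spec hev
    have hn0 : n ≠ 0 := by
      intro h
      rw [h] at hnspec
      have : x 0 ≤ 1 / (4 * m) := le_trans (le_mul_of_one_le_left (hx0 0).le hk1) hnspec
      linarith
    obtain ⟨p, hp⟩ : ∃ p, n = p + 1 :=
      ⟨n - 1, (Nat.succ_pred_eq_of_pos (Nat.pos_of_ne_zero hn0)).symm⟩
    have hpn : ¬ (|(k : ℝ)| * x p ≤ 1 / (4 * m)) := Nat.find_min hev (by omega)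
    push_neg at hpn
    have hCb : x p ≤ C * x (p + 1) := by
      have := hC p
      rw [div_le_iff₀ (hx0 (p+1))] at this
      linarith
    have hub : |(k : ℝ)| * x p ≤ 1 / 4 := by
      have h1 : |(k : ℝ)| * x p ≤ C * (|(k : ℝ)| * x (p+1)) := by
        have := mul_le_mul_of_nonneg_left hCb (abs_nonneg (k:ℝ)); linarith
      have h2 : C * (|(k : ℝ)| * x (p+1)) ≤ C * (1 / (4 * m)) := by
        rw [← hp]; exact mul_le_mul_of_nonneg_left hnspec hCpos.le
      have h3 : C * (1 / (4 * m)) ≤ 1 / 4 := by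
        rw [mul_one_div, div_le_div_iff₀ (by positivity) (by norm_num)]
        nlinarith
      linarith
    obtain ⟨r, hr, hre⟩ := hk p
    rw [QuotientAddGroup.eq] at hre
    obtain ⟨z, hz⟩ := AddSubgroup.mem_zmultiples_iff.mp hre
    simp only [zsmul_eq_mul, mul_one] at hz
    have habs : |(k : ℝ) * x p| = |(k:ℝ)| * x p := by
      rw [abs_mul, abs_of_pos (hx0 p)]
    have hzb : |(z : ℝ)| < 1 := by
      have h1 : |(k : ℝ) * x p| ≤ 1/4 := by rw [habs]; linarith
      have h2 : |(z : ℝ)| ≤ |(-r : ℝ)| + |(k:ℝ) * x p| := by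
        rw [hz]; exact abs_add_le _ _
      rw [abs_neg] at h2
      have hm4 : 1 / (4 * (m:ℝ)) ≤ 1/4 := by
        apply div_le_div_of_nonneg_left (by norm_num) (by norm_num)
        nlinarith
      linarith
    have hz0 : z = 0 := by
      have h := abs_lt.mp (show |z| < 1 by exact_mod_cast hzb)
      omega
    have heq : (k : ℝ) * x p = r := by
      rw [hz0] at hz; push_cast at hz; linarith
    rw [← heq, habs] at hr
    linarith
  · intro hk
    subst hk
    intro n
    exact ⟨0, by rw [abs_zero]; positivity, by norm_num⟩
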